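/- Let W be a real symmetric N×N doubly stochastic matrix and ρ ∈ [0, 1) such that ‖W v‖ ≤ √ρ ‖v‖ for every v ∈ ℝ^N with ∑_i v_i = 0. Let Q = (1/N) 𝟙 𝟙ᵀ, let η > 0 and μ ∈ (0, 1], and let X_0, X_1, …, and G_1, G_2, …, G̃_1, G̃_2, … be d×N real matrices with X_0 (I − Q) = 0, satisfying X_k = X_{k−1} W − η G̃_k and ‖G̃_k‖_F ≤ μ ‖G_k‖_F for every k ≥ 1. Then for every k ≥ 1, ‖X_k (I − Q)‖_F² ≤ (η² μ² / (1 − √ρ)) ∑_{τ=0}^{k−1} ρ^{(k−1−τ)/2} ‖G_{τ+1}‖_F². -/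

import Mathlib

/-- Squared Frobenius norm of a real matrix: the sum of the squares of its entries. -/
noncomputable def frobSq {d N : ℕ} (A : Matrix (Fin d) (Fin N) ℝ) : ℝ :=
  ∑ r : Fin d, ∑ c : Fin N, (A r c) ^ 2

section Aux

attribute [local instance] Matrix.frobeniusSeminormedAddCommGroup

lemma frobSq_nonneg' {d N : ℕ} (A : Matrix (Fin d) (Fin N) ℝ) : 0 ≤ frobSq A :=
  Finset.sum_nonneg fun _ _ => Finset.sum_nonneg fun _ _ => sq_nonneg _

lemma norm_eq_sqrt_frobSq {d N : ℕ} (A : Matrix (Fin d) (Fin N) ℝ) :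
    ‖A‖ = Real.sqrt (frobSq A) := by
  rw [Matrix.frobenius_norm_def, Real.sqrt_eq_rpow, frobSq]
  congr 1
  refine Finset.sum_congr rfl fun r _ => Finset.sum_congr rfl fun c _ => ?_
  rw [show ((2:ℝ)) = ((2:ℕ):ℝ) by norm_num, Real.rpow_natCast, Real.norm_eq_abs, sq_abs]

lemma sqrt_frobSq_sub_le {d N : ℕ} (A B : Matrix (Fin d) (Fin N) ℝ) :
    Real.sqrt (frobSq (A - B)) ≤ Real.sqrt (frobSq A) + Real.sqrt (frobSq B) := by
  rw [← norm_eq_sqrt_frobSq, ← norm_eq_sqrt_frobSq, ← norm_eq_sqrt_frobSq]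
  exact norm_sub_le A B

end Aux

lemma frobSq_smul {d N : ℕ} (a : ℝ) (A : Matrix (Fin d) (Fin N) ℝ) :
    frobSq (a • A) = a ^ 2 * frobSq A := by
  simp [frobSq, Matrix.smul_apply, smul_eq_mul, mul_pow, Finset.mul_sum]

/-- Deterministic core consensus estimate (equations (25)–(27)) from which Lemma 4.2
follows by taking expectations: under the contraction property of the symmetric
doubly stochastic mixing matrix `W`, the recursion `X_k = X_{k−1} W − η G̃_k` with
`‖G̃_k‖_F ≤ μ‖G_k‖_F` and `X_0(I−Q) = 0` satisfies
`‖X_k (I − Q)‖_F² ≤ (η² μ² / (1 − √ρ)) ∑_{τ=0}^{k−1} ρ^{(k−1−τ)/2} ‖G_{τ+1}‖_F²`. -/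
theorem consensus_error_core_estimate
    {d N : ℕ} (W : Matrix (Fin N) (Fin N) ℝ) (hsymm : W.IsSymm)
    (hnonneg : ∀ i j, 0 ≤ W i j)
    (hrow : ∀ i, ∑ j : Fin N, W i j = 1)
    (hcol : ∀ j, ∑ i : Fin N, W i j = 1)
    (ρ : ℝ) (hρ0 : 0 ≤ ρ) (hρ1 : ρ < 1)
    (hcontr : ∀ v : Fin N → ℝ, (∑ i : Fin N, v i = 0) →
      Real.sqrt (∑ i : Fin N, (W.mulVec v i) ^ 2) ≤
        Real.sqrt ρ * Real.sqrt (∑ i : Fin N, (v i) ^ 2))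
    (Q : Matrix (Fin N) (Fin N) ℝ)
    (hQ : Q = (1 / (N : ℝ)) • Matrix.vecMulVec (fun _ => (1 : ℝ)) (fun _ => (1 : ℝ)))
    (η μ : ℝ) (hη : 0 < η) (hμ0 : 0 < μ) (hμ1 : μ ≤ 1)
    (X G Gt : ℕ → Matrix (Fin d) (Fin N) ℝ)
    (hX0 : X 0 * (1 - Q) = 0)
    (hrec : ∀ k, 1 ≤ k → X k = X (k - 1) * W - η • Gt k)
    (hGt : ∀ k, 1 ≤ k → Real.sqrt (frobSq (Gt k)) ≤ μ * Real.sqrt (frobSq (G k))) :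
    ∀ k, 1 ≤ k →
      frobSq (X k * (1 - Q)) ≤
        (η ^ 2 * μ ^ 2 / (1 - Real.sqrt ρ)) *
          ∑ τ ∈ Finset.range k,
            ρ ^ (((k : ℝ) - 1 - (τ : ℝ)) / 2) * frobSq (G (τ + 1)) := by
  set s := Real.sqrt ρ with hs
  have hs0 : 0 ≤ s := Real.sqrt_nonneg ρ
  have hs1 : s < 1 := by
    rw [hs]
    exact (Real.sqrt_lt' one_pos).mpr (by nlinarith)
  have h1s : 0 < 1 - s := by linarith
  have hQij : ∀ i j, Q i j = 1 / (N : ℝ) := by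
    intro i j; simp [hQ, Matrix.vecMulVec_apply]
  -- entrywise formula for A * (1 - Q)
  have h_apply : ∀ (A : Matrix (Fin d) (Fin N) ℝ) (r : Fin d) (c : Fin N),
      ((A * (1 - Q)) : Matrix (Fin d) (Fin N) ℝ) r c
        = A r c - (1 / (N : ℝ)) * ∑ j : Fin N, A r j := by
    intro A r c
    have h1 : ((A * (1 - Q)) : Matrix (Fin d) (Fin N) ℝ) r c
        = ∑ j : Fin N, A r j * ((if j = c then (1:ℝ) else 0) - 1 / (N : ℝ)) := by
      simp only [Matrix.mul_apply, Matrix.sub_apply, Matrix.one_apply, hQij]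
    rw [h1, Finset.sum_congr rfl (fun j _ => mul_sub (A r j) _ _), Finset.sum_sub_distrib]
    congr 1
    · simp
    · rw [Finset.mul_sum]
      exact Finset.sum_congr rfl fun j _ => mul_comm _ _
  -- rows of A * (1 - Q) sum to zero
  have h_rowsum : ∀ (A : Matrix (Fin d) (Fin N) ℝ) (r : Fin d),
      ∑ c : Fin N, ((A * (1 - Q)) : Matrix (Fin d) (Fin N) ℝ) r c = 0 := by
    intro A r
    rcases Nat.eq_zero_or_pos N with hN | hN
    · subst hN; simp
    · have hNne : (N : ℝ) ≠ 0 := Nat.cast_ne_zero.mpr hN.ne'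
      simp only [h_apply, Finset.sum_sub_distrib, Finset.sum_const, Finset.card_univ,
        Fintype.card_fin, nsmul_eq_mul]
      field_simp
      ring
  -- projection bound
  have h_proj : ∀ (A : Matrix (Fin d) (Fin N) ℝ), frobSq (A * (1 - Q)) ≤ frobSq A := by
    intro A
    unfold frobSq
    refine Finset.sum_le_sum fun r _ => ?_
    rcases Nat.eq_zero_or_pos N with hN | hN
    · subst hN; simp
    have hNpos : (0:ℝ) < (N : ℝ) := by exact_mod_cast hN
    set S := ∑ j : Fin N, A r j with hS
    set m := (1 / (N : ℝ)) * S with hm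
    have hNm : (N : ℝ) * m = S := by rw [hm]; field_simp
    have hSm : 0 ≤ S * m := by
      have : S * m = (1 / (N : ℝ)) * S ^ 2 := by rw [hm]; ring
      rw [this]; positivity
    have hNm2 : (N : ℝ) * m ^ 2 = S * m := by rw [pow_two, ← mul_assoc, hNm]
    calc ∑ c : Fin N, (((A * (1 - Q)) : Matrix (Fin d) (Fin N) ℝ) r c) ^ 2
        = ∑ c : Fin N, ((A r c) ^ 2 - 2 * m * (A r c) + m ^ 2) := by
          refine Finset.sum_congr rfl fun c _ => ?_
          rw [h_apply A r c, ← hS, ← hm]; ring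
      _ = (∑ c : Fin N, (A r c) ^ 2) - 2 * m * S + (N : ℝ) * m ^ 2 := by
          rw [Finset.sum_add_distrib, Finset.sum_sub_distrib, ← Finset.mul_sum, ← hS,
            Finset.sum_const, Finset.card_univ, Fintype.card_fin, nsmul_eq_mul]
      _ ≤ ∑ c : Fin N, (A r c) ^ 2 := by nlinarith [hNm2, hSm]
  -- contraction bound
  have h_contr : ∀ (A : Matrix (Fin d) (Fin N) ℝ),
      (∀ r, ∑ c : Fin N, A r c = 0) → frobSq (A * W) ≤ ρ * frobSq A := by
    intro A hA
    unfold frobSq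
    rw [Finset.mul_sum]
    refine Finset.sum_le_sum fun r _ => ?_
    have hrw : ∀ c, ((A * W) : Matrix (Fin d) (Fin N) ℝ) r c = W.mulVec (A r) c := by
      intro c
      simp only [Matrix.mul_apply, Matrix.mulVec, dotProduct]
      exact Finset.sum_congr rfl fun j _ => by rw [mul_comm, hsymm.apply c j]
    have h2 : ∑ c : Fin N, (((A * W) : Matrix (Fin d) (Fin N) ℝ) r c) ^ 2
        = ∑ c : Fin N, (W.mulVec (A r) c) ^ 2 :=
      Finset.sum_congr rfl fun c _ => by rw [hrw c]
    rw [h2]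
    have hnn : 0 ≤ ∑ c : Fin N, (W.mulVec (A r) c) ^ 2 :=
      Finset.sum_nonneg fun _ _ => sq_nonneg _
    have hnn2 : 0 ≤ ∑ c : Fin N, (A r c) ^ 2 :=
      Finset.sum_nonneg fun _ _ => sq_nonneg _
    have h1 := hcontr (A r) (hA r)
    have h3 := mul_self_le_mul_self (Real.sqrt_nonneg _) h1
    rw [Real.mul_self_sqrt hnn] at h3
    calc ∑ c : Fin N, (W.mulVec (A r) c) ^ 2
        ≤ (s * Real.sqrt (∑ c : Fin N, (A r c) ^ 2))
            * (s * Real.sqrt (∑ c : Fin N, (A r c) ^ 2)) := h3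
      _ = ρ * ∑ c : Fin N, (A r c) ^ 2 := by
          rw [mul_mul_mul_comm, hs, Real.mul_self_sqrt hρ0, Real.mul_self_sqrt hnn2]
  -- commutation
  have hWQ : W * Q = Q := by
    ext i j
    simp only [Matrix.mul_apply, hQij]
    rw [← Finset.sum_mul, hrow i, one_mul]
  have hQW : Q * W = Q := by
    ext i j
    simp only [Matrix.mul_apply, hQij]
    rw [← Finset.mul_sum, hcol j, mul_one]
  have hcomm : W * (1 - Q) = (1 - Q) * W := by
    rw [mul_sub, sub_mul, mul_one, one_mul, hWQ, hQW]
  -- main induction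
  have main : ∀ k : ℕ, Real.sqrt (frobSq (X k * (1 - Q))) ≤
      η * μ * ∑ τ ∈ Finset.range k, s ^ (k - 1 - τ) * Real.sqrt (frobSq (G (τ + 1))) := by
    intro k
    induction k with
    | zero => simp [hX0, frobSq]
    | succ k ih =>
      have hXk : X (k + 1) * (1 - Q) = (X k * (1 - Q)) * W - η • (Gt (k + 1) * (1 - Q)) := by
        rw [hrec (k + 1) (by omega)]
        simp only [Nat.add_sub_cancel]
        rw [Matrix.sub_mul, Matrix.smul_mul]
        congr 1
        rw [Matrix.mul_assoc, hcomm, ← Matrix.mul_assoc]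
      have t1 : Real.sqrt (frobSq (X (k + 1) * (1 - Q))) ≤
          Real.sqrt (frobSq ((X k * (1 - Q)) * W))
            + Real.sqrt (frobSq (η • (Gt (k + 1) * (1 - Q)))) := by
        rw [hXk]; exact sqrt_frobSq_sub_le _ _
      have t2 : Real.sqrt (frobSq ((X k * (1 - Q)) * W)) ≤
          s * Real.sqrt (frobSq (X k * (1 - Q))) := by
        calc Real.sqrt (frobSq ((X k * (1 - Q)) * W))
            ≤ Real.sqrt (ρ * frobSq (X k * (1 - Q))) :=
              Real.sqrt_le_sqrt (h_contr (X k * (1 - Q)) (h_rowsum (X k)))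
          _ = s * Real.sqrt (frobSq (X k * (1 - Q))) := by rw [hs, Real.sqrt_mul hρ0]
      have t3 : Real.sqrt (frobSq (η • (Gt (k + 1) * (1 - Q)))) ≤
          η * (μ * Real.sqrt (frobSq (G (k + 1)))) := by
        rw [frobSq_smul, Real.sqrt_mul (sq_nonneg η), Real.sqrt_sq hη.le]
        have hp : Real.sqrt (frobSq (Gt (k + 1) * (1 - Q))) ≤ Real.sqrt (frobSq (Gt (k + 1))) :=
          Real.sqrt_le_sqrt (h_proj _)
        exact mul_le_mul_of_nonneg_left (hp.trans (hGt (k + 1) (by omega))) hη.le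
      have hsum : s * ∑ τ ∈ Finset.range k, s ^ (k - 1 - τ) * Real.sqrt (frobSq (G (τ + 1)))
          = ∑ τ ∈ Finset.range k, s ^ (k - τ) * Real.sqrt (frobSq (G (τ + 1))) := by
        rw [Finset.mul_sum]
        refine Finset.sum_congr rfl fun τ hτ => ?_
        have hτk : τ < k := Finset.mem_range.mp hτ
        have he : k - τ = (k - 1 - τ) + 1 := by omega
        rw [he, pow_succ]; ring
      have ihs : s * Real.sqrt (frobSq (X k * (1 - Q))) ≤
          s * (η * μ * ∑ τ ∈ Finset.range k, s ^ (k - 1 - τ) * Real.sqrt (frobSq (G (τ + 1)))) :=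
        mul_le_mul_of_nonneg_left ih hs0
      have hfinal : Real.sqrt (frobSq (X (k + 1) * (1 - Q))) ≤
          η * μ * (∑ τ ∈ Finset.range k, s ^ (k - τ) * Real.sqrt (frobSq (G (τ + 1)))
            + Real.sqrt (frobSq (G (k + 1)))) := by
        have := t1.trans (add_le_add (t2.trans ihs) t3)
        calc Real.sqrt (frobSq (X (k + 1) * (1 - Q)))
            ≤ s * (η * μ * ∑ τ ∈ Finset.range k, s ^ (k - 1 - τ) * Real.sqrt (frobSq (G (τ + 1))))
              + η * (μ * Real.sqrt (frobSq (G (k + 1)))) := this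
          _ = η * μ * (s * ∑ τ ∈ Finset.range k, s ^ (k - 1 - τ) * Real.sqrt (frobSq (G (τ + 1)))
              + Real.sqrt (frobSq (G (k + 1)))) := by ring
          _ = _ := by rw [hsum]
      calc Real.sqrt (frobSq (X (k + 1) * (1 - Q))) ≤ _ := hfinal
        _ = η * μ * ∑ τ ∈ Finset.range (k + 1),
              s ^ (k + 1 - 1 - τ) * Real.sqrt (frobSq (G (τ + 1))) := by
            rw [Finset.sum_range_succ]
            simp only [Nat.add_sub_cancel, Nat.sub_self, pow_zero, one_mul]
  -- conclude
  intro k hk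
  set c : ℕ → ℝ := fun τ => Real.sqrt (frobSq (G (τ + 1))) with hc
  have hcnn : ∀ τ, 0 ≤ c τ := fun τ => Real.sqrt_nonneg _
  set T := ∑ τ ∈ Finset.range k, s ^ (k - 1 - τ) * c τ with hT
  have hTnn : 0 ≤ T :=
    Finset.sum_nonneg fun τ _ => mul_nonneg (pow_nonneg hs0 _) (hcnn τ)
  set R := ∑ τ ∈ Finset.range k, s ^ (k - 1 - τ) * frobSq (G (τ + 1)) with hR
  have hRnn : 0 ≤ R :=
    Finset.sum_nonneg fun τ _ => mul_nonneg (pow_nonneg hs0 _) (frobSq_nonneg' _)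
  -- Cauchy–Schwarz
  have CS : T ^ 2 ≤ (∑ τ ∈ Finset.range k, s ^ (k - 1 - τ)) * R := by
    have h := Finset.sum_mul_sq_le_sq_mul_sq (Finset.range k)
      (fun τ => Real.sqrt (s ^ (k - 1 - τ))) (fun τ => Real.sqrt (s ^ (k - 1 - τ)) * c τ)
    have e1 : ∑ τ ∈ Finset.range k,
        Real.sqrt (s ^ (k - 1 - τ)) * (Real.sqrt (s ^ (k - 1 - τ)) * c τ) = T := by
      refine Finset.sum_congr rfl fun τ _ => ?_
      rw [← mul_assoc, Real.mul_self_sqrt (pow_nonneg hs0 _)]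
    have e2 : ∑ τ ∈ Finset.range k, Real.sqrt (s ^ (k - 1 - τ)) ^ 2
        = ∑ τ ∈ Finset.range k, s ^ (k - 1 - τ) :=
      Finset.sum_congr rfl fun τ _ => Real.sq_sqrt (pow_nonneg hs0 _)
    have e3 : ∑ τ ∈ Finset.range k, (Real.sqrt (s ^ (k - 1 - τ)) * c τ) ^ 2 = R := by
      refine Finset.sum_congr rfl fun τ _ => ?_
      rw [mul_pow, Real.sq_sqrt (pow_nonneg hs0 _), hc, Real.sq_sqrt (frobSq_nonneg' _)]
    rw [e1, e2, e3] at h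
    exact h
  have hgeom : (∑ τ ∈ Finset.range k, s ^ (k - 1 - τ)) ≤ (1 - s)⁻¹ := by
    have hrefl : ∑ τ ∈ Finset.range k, s ^ (k - 1 - τ) = ∑ j ∈ Finset.range k, s ^ j :=
      Finset.sum_range_reflect (fun j => s ^ j) k
    rw [hrefl, geom_sum_eq hs1.ne k]
    have hd : (s ^ k - 1) / (s - 1) = (1 - s ^ k) / (1 - s) := by
      rw [div_eq_div_iff (by linarith [h1s] : s - 1 ≠ 0) h1s.ne']
      ring
    rw [hd, inv_eq_one_div]
    have hnum : 1 - s ^ k ≤ 1 := by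
      have := pow_nonneg hs0 k; linarith
    gcongr
  -- convert rpow to pow in RHS
  have hpow : ∀ τ ∈ Finset.range k,
      ρ ^ (((k : ℝ) - 1 - (τ : ℝ)) / 2) * frobSq (G (τ + 1))
        = s ^ (k - 1 - τ) * frobSq (G (τ + 1)) := by
    intro τ hτ
    have hτk : τ < k := Finset.mem_range.mp hτ
    have hcast : ((k : ℝ) - 1 - (τ : ℝ)) = ((k - 1 - τ : ℕ) : ℝ) := by
      have h2 : k - 1 - τ = k - (1 + τ) := by omega
      rw [h2, Nat.cast_sub (by omega)]
      push_cast; ring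
    congr 1
    rw [hcast, hs, Real.sqrt_eq_rpow, ← Real.rpow_natCast (ρ ^ (1 / (2:ℝ))) (k - 1 - τ),
      ← Real.rpow_mul hρ0]
    congr 1
    ring
  have hRHS : ∑ τ ∈ Finset.range k,
      ρ ^ (((k : ℝ) - 1 - (τ : ℝ)) / 2) * frobSq (G (τ + 1)) = R :=
    Finset.sum_congr rfl hpow
  rw [hRHS]
  have ha : Real.sqrt (frobSq (X k * (1 - Q))) ≤ η * μ * T := main k
  have hfs : frobSq (X k * (1 - Q)) = Real.sqrt (frobSq (X k * (1 - Q))) ^ 2 :=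
    (Real.sq_sqrt (frobSq_nonneg' _)).symm
  have hsq : Real.sqrt (frobSq (X k * (1 - Q))) ^ 2 ≤ (η * μ * T) ^ 2 :=
    pow_le_pow_left₀ (Real.sqrt_nonneg _) ha 2
  have hT2 : (η * μ * T) ^ 2 ≤ η ^ 2 * μ ^ 2 * ((1 - s)⁻¹ * R) := by
    have h4 : T ^ 2 ≤ (1 - s)⁻¹ * R :=
      CS.trans (mul_le_mul_of_nonneg_right hgeom hRnn)
    calc (η * μ * T) ^ 2 = η ^ 2 * μ ^ 2 * T ^ 2 := by ring
      _ ≤ η ^ 2 * μ ^ 2 * ((1 - s)⁻¹ * R) := by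
          apply mul_le_mul_of_nonneg_left h4
          positivity
  calc frobSq (X k * (1 - Q)) = Real.sqrt (frobSq (X k * (1 - Q))) ^ 2 := hfs
    _ ≤ (η * μ * T) ^ 2 := hsq
    _ ≤ η ^ 2 * μ ^ 2 * ((1 - s)⁻¹ * R) := hT2
    _ = η ^ 2 * μ ^ 2 / (1 - s) * R := by
        rw [div_eq_mul_inv]; ring
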